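/- arXiv:2511.14995 — 3 statements merged into one kernel-verified Lean document; each statement's English description precedes it below -/
import Mathlib

section
/- (Brams–Affuso) Let N = {1,…,n} be a set of players with integer weights satisfying 1 ≤ w_ℓ for all ℓ, let q ≥ 1 be a quota, and let p ∈ N satisfy w_p ≤ q. Then #{S ⊆ N : w(S) ≥ q and w(S \ {p}) < q} = Σ_{j=q−w_p}^{q−1} [X^j] f_p, where [X^j] f_p denotes the coefficient of X^j in f_p = ∏_{ℓ∈N\{p}} (1 + X^{w_ℓ}). -/
/-- Brams–Affuso: with integer weights `w_ℓ ≥ 1`, quota `q ≥ 1`, and a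
player `p` with `w_p ≤ q`, the Banzhaf numerator
`#{S ⊆ N : w(S) ≥ q and w(S \ {p}) < q}` equals `Σ_{j=q−w_p}^{q−1} [X^j] f_p`,
where `f_p = ∏_{ℓ ∈ N \ {p}} (1 + X^{w_ℓ})`. -/
theorem brams_affuso (n q : ℕ) (hq : 1 ≤ q) (w : Fin n → ℕ) (hw : ∀ ℓ, 1 ≤ w ℓ)
    (p : Fin n) (hp : w p ≤ q) :
    (((Finset.univ : Finset (Finset (Fin n))).filter
        (fun S => q ≤ ∑ ℓ ∈ S, w ℓ ∧ ∑ ℓ ∈ S.erase p, w ℓ < q)).card : ℝ) =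
      ∑ j ∈ Finset.Icc (q - w p) (q - 1),
        (∏ ℓ ∈ Finset.univ.erase p, (1 + Polynomial.X ^ (w ℓ) : Polynomial ℝ)).coeff j := by
  classical
  have hprod : (∏ ℓ ∈ Finset.univ.erase p, (1 + Polynomial.X ^ (w ℓ) : Polynomial ℝ))
      = ∑ t ∈ (Finset.univ.erase p).powerset,
          (Polynomial.X : Polynomial ℝ) ^ (∑ ℓ ∈ t, w ℓ) := by
    rw [Finset.prod_congr rfl (fun ℓ _ => add_comm (1:Polynomial ℝ) (Polynomial.X ^ (w ℓ))),
      Finset.prod_add]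
    refine Finset.sum_congr rfl fun t ht => ?_
    simp [Finset.prod_pow_eq_pow_sum]
  have hcoeff : ∀ j, (∏ ℓ ∈ Finset.univ.erase p,
      (1 + Polynomial.X ^ (w ℓ) : Polynomial ℝ)).coeff j
      = ∑ t ∈ (Finset.univ.erase p).powerset, if (∑ ℓ ∈ t, w ℓ) = j then (1:ℝ) else 0 := by
    intro j
    rw [hprod, Polynomial.finset_sum_coeff]
    refine Finset.sum_congr rfl fun t _ => ?_
    rw [Polynomial.coeff_X_pow]
    simp [eq_comm]
  rw [Finset.sum_congr rfl fun j _ => hcoeff j, Finset.sum_comm]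
  have step : ∀ t ∈ (Finset.univ.erase p).powerset,
      (∑ j ∈ Finset.Icc (q - w p) (q - 1), if (∑ ℓ ∈ t, w ℓ) = j then (1:ℝ) else 0)
      = if (∑ ℓ ∈ t, w ℓ) ∈ Finset.Icc (q - w p) (q - 1) then (1:ℝ) else 0 := by
    intro t _
    rw [Finset.sum_ite_eq]
  rw [Finset.sum_congr rfl step, Finset.sum_boole]
  norm_cast
  refine Finset.card_bij (fun S _ => S.erase p) ?_ ?_ ?_
  · intro S hS
    simp only [Finset.mem_filter, Finset.mem_univ, true_and] at hS
    obtain ⟨h1, h2⟩ := hS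
    have hpS : p ∈ S := by
      by_contra hpn
      rw [Finset.erase_eq_of_notMem hpn] at h2
      omega
    have hsum : ∑ ℓ ∈ S.erase p, w ℓ + w p = ∑ ℓ ∈ S, w ℓ :=
      Finset.sum_erase_add _ _ hpS
    simp only [Finset.mem_filter, Finset.mem_powerset, Finset.mem_Icc]
    refine ⟨Finset.erase_subset_erase _ (Finset.subset_univ S), ?_, ?_⟩ <;> omega
  · intro S hS S' hS' hEq
    simp only [Finset.mem_filter, Finset.mem_univ, true_and] at hS hS'
    have hpS : p ∈ S := by
      by_contra hpn
      rw [Finset.erase_eq_of_notMem hpn] at hS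
      omega
    have hpS' : p ∈ S' := by
      by_contra hpn
      rw [Finset.erase_eq_of_notMem hpn] at hS'
      omega
    have hEq' : S.erase p = S'.erase p := hEq
    rw [← Finset.insert_erase hpS, ← Finset.insert_erase hpS', hEq']
  · intro t ht
    simp only [Finset.mem_filter, Finset.mem_powerset, Finset.mem_Icc] at ht
    obtain ⟨hsub, h1, h2⟩ := ht
    have hpt : p ∉ t := fun h => (Finset.notMem_erase p _) (hsub h)
    refine ⟨insert p t, ?_, ?_⟩
    · simp only [Finset.mem_filter, Finset.mem_univ, true_and]
      rw [Finset.sum_insert hpt, Finset.erase_insert hpt]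
      omega
    · exact Finset.erase_insert hpt
end

section
/- Let N = {1,…,n} be a set of players with integer weights satisfying 1 ≤ w_ℓ for all ℓ, let q ≥ 1 be a quota, and let p ∈ N satisfy w_p ≤ q − 1. Then #{S ⊆ N : w(S) ≥ q and w(S \ {p}) < q} = [X^{q−1}] (f_p · (1 − X)^{−1}) − [X^{q−w_p−1}] (f_p · (1 − X)^{−1}), where the products and the inverse of 1 − X are taken in the formal power series ring and [X^j] denotes the j-th coefficient. -/
/-!
Expanding `f_p = ∏ (1 + X^{w_ℓ})` over subsets gives `∑_{T ⊆ N \ {p}} X^{w(T)}`, and multiplying by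
`(1 - X)⁻¹ = ∑ X^i` turns the coefficient of `X^d` into the number of `T` with `w(T) ≤ d`. The
difference of the two coefficients therefore counts the `T ⊆ N \ {p}` with `q - w_p ≤ w(T) < q`, and
these are exactly the sets `S \ {p}` for the coalitions `S` in which `p` is decisive.
-/

open Finset PowerSeries

theorem PowerSeries.coeff_X_pow_mul_mk_one {R : Type*} [Semiring R] (k d : ℕ) :
    coeff d (X ^ k * mk fun _ => (1 : R)) = if k ≤ d then 1 else 0 := by
  rw [coeff_X_pow_mul']
  split_ifs <;> simp

section SubsetSums

variable {ι : Type*} (w : ι → ℕ)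

theorem prod_one_add_X_pow_eq_sum_powerset {R : Type*} [CommSemiring R] (s : Finset ι) :
    ∏ ℓ ∈ s, (1 + X ^ w ℓ : R⟦X⟧) = ∑ T ∈ s.powerset, X ^ ∑ ℓ ∈ T, w ℓ := by
  simp only [prod_one_add, prod_pow_eq_pow_sum]

theorem coeff_prod_one_add_X_pow_mul_mk_one {R : Type*} [CommSemiring R] (s : Finset ι) (d : ℕ) :
    coeff d ((∏ ℓ ∈ s, (1 + X ^ w ℓ : R⟦X⟧)) * mk fun _ => (1 : R)) =
      #{T ∈ s.powerset | ∑ ℓ ∈ T, w ℓ ≤ d} := by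
  rw [prod_one_add_X_pow_eq_sum_powerset, sum_mul, map_sum]
  simp only [coeff_X_pow_mul_mk_one, sum_boole]

theorem card_swings_eq_card_powerset_erase [Fintype ι] [DecidableEq ι] (q : ℕ) (p : ι) :
    #{S : Finset ι | q ≤ ∑ ℓ ∈ S, w ℓ ∧ ∑ ℓ ∈ S.erase p, w ℓ < q} =
      #{T ∈ (univ.erase p).powerset | q ≤ ∑ ℓ ∈ T, w ℓ + w p ∧ ∑ ℓ ∈ T, w ℓ < q} := by
  have mem_of_swing {S : Finset ι} (hS : q ≤ ∑ ℓ ∈ S, w ℓ ∧ ∑ ℓ ∈ S.erase p, w ℓ < q) : p ∈ S := by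
    by_contra hp
    rw [erase_eq_of_notMem hp] at hS
    omega
  refine card_nbij' (·.erase p) (insert p ·) ?_ ?_ ?_ ?_
  · intro S hS
    simp only [coe_filter, Set.mem_ofPred_eq, mem_univ, true_and, mem_powerset] at hS ⊢
    rw [sum_erase_add _ _ (mem_of_swing hS)]
    exact ⟨erase_subset_erase p (subset_univ S), hS⟩
  · intro T hT
    simp only [coe_filter, Set.mem_ofPred_eq, mem_univ, true_and, mem_powerset] at hT ⊢
    have hp : p ∉ T := fun h => by simpa using hT.1 h
    rw [sum_insert hp, erase_insert hp, add_comm]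
    exact hT.2
  · intro S hS
    exact insert_erase (mem_of_swing (by simpa using hS))
  · intro T hT
    exact erase_insert fun h => by simpa using (mem_powerset.1 (mem_filter.1 hT).1) h

end SubsetSums

theorem Finset.card_filter_le_add_card_filter_lt_le {α : Type*} (s : Finset α) (f : α → ℕ)
    {a b : ℕ} (hab : a ≤ b) :
    #{x ∈ s | f x ≤ a} + #{x ∈ s | a < f x ∧ f x ≤ b} = #{x ∈ s | f x ≤ b} := by
  rw [← card_filter_add_card_filter_not (s := {x ∈ s | f x ≤ b}) (fun x => f x ≤ a),
    filter_filter, filter_filter]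
  congr 2 <;> refine filter_congr fun x _ => ?_ <;> omega

theorem banzhaf_via_geometric_series_general (n q : ℕ) (w : Fin n → ℕ) (p : Fin n) (hp : w p ≤ q - 1) :
    (((Finset.univ : Finset (Finset (Fin n))).filter
        (fun S => q ≤ ∑ ℓ ∈ S, w ℓ ∧ ∑ ℓ ∈ S.erase p, w ℓ < q)).card : ℝ) =
      PowerSeries.coeff (q - 1)
        ((∏ ℓ ∈ Finset.univ.erase p, (1 + PowerSeries.X ^ (w ℓ) : PowerSeries ℝ)) *
          PowerSeries.mk (fun _ => (1 : ℝ))) -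
      PowerSeries.coeff (q - w p - 1)
        ((∏ ℓ ∈ Finset.univ.erase p, (1 + PowerSeries.X ^ (w ℓ) : PowerSeries ℝ)) *
          PowerSeries.mk (fun _ => (1 : ℝ))) := by
  rw [coeff_prod_one_add_X_pow_mul_mk_one, coeff_prod_one_add_X_pow_mul_mk_one,
    ← card_filter_le_add_card_filter_lt_le _ _ (by omega : q - w p - 1 ≤ q - 1), Nat.cast_add,
    add_sub_cancel_left, card_swings_eq_card_powerset_erase]
  congr 2
  refine filter_congr fun T _ => ?_
  -- `hp` keeps `q - w p - 1` from truncating, so `q - w p - 1 < w(T)` means `q ≤ w(T) + w p`.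
  omega

/-- with integer weights `w_ℓ ≥ 1`, quota `q ≥ 1`, and a player `p` with
`w_p ≤ q − 1`, the Banzhaf numerator `#{S ⊆ N : w(S) ≥ q and w(S \ {p}) < q}` equals
`[X^{q−1}] (f_p · (1 − X)⁻¹) − [X^{q−w_p−1}] (f_p · (1 − X)⁻¹)`, where
`f_p = ∏_{ℓ ∈ N \ {p}} (1 + X^{w_ℓ})` is viewed as a formal power series and
`(1 − X)⁻¹ = Σ_{i≥0} X^i`. -/
theorem banzhaf_via_geometric_series (n q : ℕ) (hq : 1 ≤ q) (w : Fin n → ℕ)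
    (hw : ∀ ℓ, 1 ≤ w ℓ) (p : Fin n) (hp : w p ≤ q - 1) :
    (((Finset.univ : Finset (Finset (Fin n))).filter
        (fun S => q ≤ ∑ ℓ ∈ S, w ℓ ∧ ∑ ℓ ∈ S.erase p, w ℓ < q)).card : ℝ) =
      PowerSeries.coeff (q - 1)
        ((∏ ℓ ∈ Finset.univ.erase p, (1 + PowerSeries.X ^ (w ℓ) : PowerSeries ℝ)) *
          PowerSeries.mk (fun _ => (1 : ℝ))) -
      PowerSeries.coeff (q - w p - 1)
        ((∏ ℓ ∈ Finset.univ.erase p, (1 + PowerSeries.X ^ (w ℓ) : PowerSeries ℝ)) *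
          PowerSeries.mk (fun _ => (1 : ℝ))) :=
  banzhaf_via_geometric_series_general n q w p hp
end

section
/- (Cantor, generating-function form) Let N = {1,…,n} be a set of players with integer weights satisfying 1 ≤ w_ℓ for all ℓ, let q be a quota with 1 ≤ q ≤ w(N), and let p ∈ N satisfy w_p ≤ q. Then the number of permutations π of N for which there exists k with w(S_{k−1}(π)) < q ≤ w(S_k(π)) and π_k = p equals Σ_{k=0}^{n−1} k! · (n − 1 − k)! · Σ_{j=q−w_p}^{q−1} [Y^k X^j] f_p, where [Y^k X^j] f_p denotes the coefficient of Y^k X^j in the two-variable polynomial f_p = ∏_{ℓ∈N\{p}} (1 + Y·X^{w_ℓ}). -/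
/-!
Write `P(π)` for the set of players preceding `p` in the order `π`. Player `p` is pivotal in `π`
exactly when `w(P(π)) < q ≤ w(P(π)) + w_p`, so the permutations are counted by their value of
`P(π)`. For a fixed `S ⊆ N \ {p}` of size `k`, the permutations with `P(π) = S` are those placing
`S` in the first `k` positions, `p` at position `k` and the rest afterwards. They form a coset
of the group of permutations preserving this three-block labelling, so there are
`k! · (n - 1 - k)!` of them. On the other side, the coefficient of `Y^k X^j` in `f_p` counts the
subsets of `N \ {p}` of size `k` and weight `j`.
-/

open Finset Equiv Polynomial

theorem card_perm_comp_eq {α ι : Type*} [Fintype α] [DecidableEq α] [Fintype ι] [DecidableEq ι]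
    (f g : α → ι) (hfg : ∀ i, Fintype.card {a // f a = i} = Fintype.card {a // g a = i}) :
    #{π : Perm α | g ∘ π = f} = ∏ i, (Fintype.card {a // f a = i}).factorial := by
  obtain ⟨π₀, hπ₀⟩ : ∃ π₀ : Perm α, g ∘ π₀ = f :=
    ⟨ofFiberEquiv fun i => Fintype.equivOfCardEq (hfg i), funext (ofFiberEquiv_map _)⟩
  have hg : f ∘ ⇑π₀⁻¹ = g := by
    ext a
    simp [← hπ₀]
  rw [← DomMulAct.stabilizer_card, ← Fintype.card_subtype]
  refine Fintype.card_congr (subtypeEquiv (Equiv.mulLeft π₀⁻¹) fun π => ?_)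
  rw [coe_mulLeft, Perm.coe_mul, ← Function.comp_assoc, hg]

theorem Ordering.prod_univ {M : Type*} [CommMonoid M] (f : Ordering → M) :
    ∏ o, f o = f .lt * f .eq * f .gt := by
  simp [Finset.univ, Fintype.elems, mul_assoc]

/-- The sizes of the three blocks `{< a}`, `{a}`, `{> a}` of an `m`-element linear order,
when `k` elements lie below `a`. -/
def blockCard (k m : ℕ) : Ordering → ℕ
  | .lt => k
  | .eq => 1
  | .gt => m - 1 - k

section PivotLabel

variable {α : Type*} [DecidableEq α] {S : Finset α} {p a : α}

/-- Where `a` has to stand relative to `p` in an order in which `S` is the set of predecessors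
of `p`. -/
def pivotLabel (S : Finset α) (p a : α) : Ordering :=
  if a ∈ S then .lt else if a = p then .eq else .gt

lemma pivotLabel_eq_lt_iff : pivotLabel S p a = .lt ↔ a ∈ S := by
  grind [pivotLabel]

lemma pivotLabel_eq_eq_iff (hpS : p ∉ S) : pivotLabel S p a = .eq ↔ a = p := by
  grind [pivotLabel]

lemma pivotLabel_eq_gt_iff : pivotLabel S p a = .gt ↔ a ∉ insert p S := by
  grind [pivotLabel]

lemma card_pivotLabel_fiber [Fintype α] (hpS : p ∉ S) (o : Ordering) :
    Fintype.card {a // pivotLabel S p a = o} = blockCard #S (Fintype.card α) o := by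
  cases o
  · simp [pivotLabel_eq_lt_iff, blockCard]
  · simp [pivotLabel_eq_eq_iff hpS, blockCard]
  · simp only [pivotLabel_eq_gt_iff]
    rw [Fintype.card_subtype_compl, Fintype.card_coe, card_insert_of_notMem hpS, blockCard]
    omega

end PivotLabel

section Predecessors

variable {n : ℕ}

lemma card_compare_fiber (k : Fin n) (o : Ordering) :
    Fintype.card {i // compare i k = o} = blockCard k n o := by
  cases o <;> simp [Fintype.card_subtype, blockCard, compare_lt_iff_lt, compare_gt_iff_gt,
    filter_gt_eq_Iio, filter_lt_eq_Ioi]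

/-- The players standing before `p` when the players are lined up as `π 0, π 1, …`. -/
def predecessors (π : Perm (Fin n)) (p : Fin n) : Finset (Fin n) :=
  (Iio (π.symm p)).image π

lemma mem_predecessors {π : Perm (Fin n)} {p a : Fin n} :
    a ∈ predecessors π p ↔ π.symm a < π.symm p := by
  simp [predecessors, ← eq_symm_apply]

lemma notMem_predecessors (π : Perm (Fin n)) (p : Fin n) : p ∉ predecessors π p := by
  simp [mem_predecessors]

lemma card_predecessors (π : Perm (Fin n)) (p : Fin n) : #(predecessors π p) = π.symm p := by
  rw [predecessors, card_image_of_injective _ π.injective, Fin.card_Iio]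

lemma predecessors_eq_iff {π : Perm (Fin n)} {p k : Fin n} {S : Finset (Fin n)} (hpS : p ∉ S)
    (hk : (k : ℕ) = #S) : predecessors π p = S ↔ pivotLabel S p ∘ π = (compare · k) := by
  constructor
  · rintro rfl
    have hpk : π.symm p = k := Fin.ext (by rw [hk, card_predecessors])
    funext i
    simp only [Function.comp_apply, pivotLabel, mem_predecessors, symm_apply_apply, hpk,
      ← eq_symm_apply]
    rcases lt_trichotomy i k with h | rfl | h
    · simp [h, compare_lt_iff_lt.mpr h]
    · simp
    · simp [h.not_gt, h.ne', compare_gt_iff_gt.mpr h]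
  · intro h
    have hlabel (i : Fin n) : pivotLabel S p (π i) = compare i k := congrFun h i
    have hpk : π.symm p = k := by
      rw [← compare_eq_iff_eq, ← hlabel, apply_symm_apply, pivotLabel_eq_eq_iff hpS]
    ext a
    rw [mem_predecessors, hpk, ← compare_lt_iff_lt, ← hlabel, apply_symm_apply,
      pivotLabel_eq_lt_iff]

lemma card_predecessors_eq {p : Fin n} {S : Finset (Fin n)} (hpS : p ∉ S) :
    #{π : Perm (Fin n) | predecessors π p = S} = (#S).factorial * (n - 1 - #S).factorial := by
  let k : Fin n := ⟨#S, by simpa using card_lt_univ_of_notMem hpS⟩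
  rw [filter_congr fun π _ => predecessors_eq_iff (k := k) hpS rfl, card_perm_comp_eq]
  · simp [Ordering.prod_univ, card_compare_fiber, blockCard, k]
  · intro o
    rw [card_compare_fiber, card_pivotLabel_fiber hpS, Fintype.card_fin]

lemma exists_pivot_iff (w : Fin n → ℕ) (q : ℕ) (π : Perm (Fin n)) (p : Fin n) :
    (∃ k : Fin n,
        (∑ ℓ ∈ (Finset.univ.filter (fun i : Fin n => (i : ℕ) < (k : ℕ))).image (⇑π), w ℓ) < q ∧
        q ≤ ∑ ℓ ∈ (Finset.univ.filter (fun i : Fin n => (i : ℕ) < (k : ℕ) + 1)).image (⇑π), w ℓ ∧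
        π k = p) ↔
      ∑ ℓ ∈ predecessors π p, w ℓ < q ∧ q ≤ ∑ ℓ ∈ predecessors π p, w ℓ + w p := by
  have hIio (k : Fin n) : univ.filter (fun i : Fin n => (i : ℕ) < k) = Iio k := by
    ext; simp
  have hIic (k : Fin n) : univ.filter (fun i : Fin n => (i : ℕ) < k + 1) = Iic k := by
    ext; simp
  have hsum (k : Fin n) :
      ∑ ℓ ∈ (Iic k).image π, w ℓ = ∑ ℓ ∈ (Iio k).image π, w ℓ + w (π k) := by
    rw [← Iio_insert, image_insert, sum_insert (by simp), add_comm]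
  simp only [hIio, hIic, hsum, ← eq_symm_apply, ← and_assoc, exists_eq_right, apply_symm_apply]
  rfl

end Predecessors

lemma coeff_coeff_prod_one_add_C_X_mul_X_pow {R ι : Type*} [CommSemiring R] [DecidableEq ι]
    (T : Finset ι) (w : ι → ℕ) (j k : ℕ) :
    ((∏ ℓ ∈ T, (1 + C X * X ^ w ℓ : R[X][X])).coeff j).coeff k =
      #{S ∈ T.powerset | #S = k ∧ ∑ ℓ ∈ S, w ℓ = j} := by
  simp only [prod_one_add, prod_mul_distrib, prod_const, prod_pow_eq_pow_sum, ← C_pow,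
    finsetSum_coeff, coeff_C_mul_X_pow, apply_ite (coeff · k), coeff_X_pow, coeff_zero]
  rw [card_filter, Nat.cast_sum]
  refine sum_congr rfl fun S _ => ?_
  split_ifs <;> simp_all [eq_comm]

lemma sum_mul_sum_card_filter_eq {β R : Type*} [CommSemiring R] {n : ℕ} (s : Finset β)
    (f g : β → ℕ) (c : ℕ → R) (J : Finset ℕ) (hf : ∀ b ∈ s, f b < n) :
    ∑ k ∈ range n, c k * ∑ j ∈ J, (#{b ∈ s | f b = k ∧ g b = j} : R) =
      ∑ b ∈ s with g b ∈ J, c (f b) := by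
  rw [← sum_fiberwise_of_maps_to (g := f) (t := range n)
    (fun b hb => mem_range.2 (hf b (mem_filter.1 hb).1))]
  refine sum_congr rfl fun k _ => ?_
  simp_rw [← Nat.cast_sum, ← filter_filter, sum_card_fiberwise_eq_card_filter]
  rw [sum_congr rfl fun b hb => congrArg c (mem_filter.1 hb).2, sum_const, nsmul_eq_mul,
    mul_comm, filter_comm]

theorem cantor_generating_function_general (n q : ℕ) (w : Fin n → ℕ)
    (hq1 : 1 ≤ q) (p : Fin n) :
    (((Finset.univ : Finset (Equiv.Perm (Fin n))).filter
        (fun π : Equiv.Perm (Fin n) => ∃ k : Fin n,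
          (∑ ℓ ∈ (Finset.univ.filter (fun i : Fin n => (i : ℕ) < (k : ℕ))).image (⇑π), w ℓ) < q ∧
          q ≤ ∑ ℓ ∈ (Finset.univ.filter (fun i : Fin n => (i : ℕ) < (k : ℕ) + 1)).image (⇑π), w ℓ ∧
          π k = p)).card : ℝ) =
      ∑ k ∈ Finset.range n, (k.factorial : ℝ) * ((n - 1 - k).factorial : ℝ) *
        ∑ j ∈ Finset.Icc (q - w p) (q - 1),
          ((∏ ℓ ∈ Finset.univ.erase p,
              (1 + Polynomial.C Polynomial.X * Polynomial.X ^ (w ℓ) :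
                Polynomial (Polynomial ℝ))).coeff j).coeff k := by
  set G := {S ∈ (univ.erase p).powerset | ∑ ℓ ∈ S, w ℓ ∈ Icc (q - w p) (q - 1)}
  have hpS {S} (hS : S ∈ (univ.erase p).powerset) : p ∉ S := (subset_erase.1 (mem_powerset.1 hS)).2
  have hG (π : Perm (Fin n)) : (∑ ℓ ∈ predecessors π p, w ℓ < q ∧
      q ≤ ∑ ℓ ∈ predecessors π p, w ℓ + w p) ↔ predecessors π p ∈ G := by
    simp only [G, mem_filter, mem_powerset, subset_erase, subset_univ, notMem_predecessors,
      not_false_eq_true, and_self, true_and, mem_Icc]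
    omega
  simp_rw [exists_pivot_iff, hG, ← sum_card_fiberwise_eq_card_filter,
    coeff_coeff_prod_one_add_C_X_mul_X_pow]
  rw [sum_mul_sum_card_filter_eq _ _ _ _ _
    fun S hS => by simpa using card_lt_univ_of_notMem (hpS hS), Nat.cast_sum]
  refine sum_congr rfl fun S hS => ?_
  rw [card_predecessors_eq (hpS (mem_filter.1 hS).1), Nat.cast_mul]

/-- Cantor, generating-function form: with integer weights `w_ℓ ≥ 1`,
quota `1 ≤ q ≤ w(N)`, and a player `p` with `w_p ≤ q`, the Shapley–Shubik numerator —
the number of permutations `π` of `N` for which there exists `k` with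
`w(S_{k−1}(π)) < q ≤ w(S_k(π))` and `π_k = p` — equals
`Σ_{k=0}^{n−1} k!·(n−1−k)!· Σ_{j=q−w_p}^{q−1} [Y^k X^j] f_p`, where
`f_p = ∏_{ℓ ∈ N \ {p}} (1 + Y·X^{w_ℓ})` is realized in `(ℝ[Y])[X]` with
`Y = Polynomial.C Polynomial.X`, so `[Y^k X^j] f = (f.coeff j).coeff k`. -/
theorem cantor_generating_function (n q : ℕ) (w : Fin n → ℕ) (hw : ∀ ℓ, 1 ≤ w ℓ)
    (hq1 : 1 ≤ q) (hq2 : q ≤ ∑ ℓ, w ℓ) (p : Fin n) (hp : w p ≤ q) :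
    (((Finset.univ : Finset (Equiv.Perm (Fin n))).filter
        (fun π : Equiv.Perm (Fin n) => ∃ k : Fin n,
          (∑ ℓ ∈ (Finset.univ.filter (fun i : Fin n => (i : ℕ) < (k : ℕ))).image (⇑π), w ℓ) < q ∧
          q ≤ ∑ ℓ ∈ (Finset.univ.filter (fun i : Fin n => (i : ℕ) < (k : ℕ) + 1)).image (⇑π), w ℓ ∧
          π k = p)).card : ℝ) =
      ∑ k ∈ Finset.range n, (k.factorial : ℝ) * ((n - 1 - k).factorial : ℝ) *
        ∑ j ∈ Finset.Icc (q - w p) (q - 1),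
          ((∏ ℓ ∈ Finset.univ.erase p,
              (1 + Polynomial.C Polynomial.X * Polynomial.X ^ (w ℓ) :
                Polynomial (Polynomial ℝ))).coeff j).coeff k :=
  cantor_generating_function_general n q w hq1 p
end
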